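/- There exists a constant C > 0 such that the Frobenius norm of the deformed Mertens matrix satisfies ‖M̃_n‖_F ≤ C √n · log(n + 1) for all positive integers n. -/

import Mathlib

/-- The set of approximate divisors of `n`: distinct values of `⌊n/k⌋` for `1 ≤ k ≤ n`. -/
def Sn (n : ℕ) : Finset ℕ := (Finset.Icc 1 n).image (fun k => n / k)

/-- The increasing enumeration `k_1 < ⋯ < k_s` of `S_n` (0-indexed by `Fin s`). -/
noncomputable def kseq (n : ℕ) : Fin (Sn n).card → ℕ :=
  fun i => ((Sn n).orderIsoOfFin rfl i : ℕ)

/-- The real matrix `T` with ones on and above the antidiagonal. -/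
def TmatR (s : ℕ) : Matrix (Fin s) (Fin s) ℝ :=
  fun i j => if (i : ℕ) + (j : ℕ) + 1 ≤ s then 1 else 0

/-- The deformed matrix `Ũ_n`, with entries `n/(k_i k_j)` on and above the
antidiagonal and `0` below it. -/
noncomputable def Utilde (n : ℕ) : Matrix (Fin (Sn n).card) (Fin (Sn n).card) ℝ :=
  fun i j => if (i : ℕ) + (j : ℕ) + 1 ≤ (Sn n).card then
    (n : ℝ) / ((kseq n i : ℝ) * (kseq n j : ℝ)) else 0

/-- The deformed Mertens matrix `M̃_n = T Ũ_n⁻¹ T`. -/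
noncomputable def Mtilde (n : ℕ) : Matrix (Fin (Sn n).card) (Fin (Sn n).card) ℝ :=
  TmatR (Sn n).card * (Utilde n)⁻¹ * TmatR (Sn n).card

/-!
Let `k₀ < ⋯ < k_{s-1}` enumerate `S_n`. Since `Ũ_n = diag(n/k) T diag(1/k)`, we get
`M̃_n = T diag(k) T⁻¹ diag(k/n) T`, where `T⁻¹` is the antidiagonal minus its shift. By Abel
summation, with `m = s-1-i`, the entry `(i, j)` is `0` for `j > m` and otherwise equals
`k_m k_i / n - ∑_{j ≤ a < m} (k_{a+1} - k_a) k_{s-1-a} / n`.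
As `k_{s-1-a} = ⌊n/k_a⌋`, the first term lies in `[0, 1]` and the `a`-th summand is at most
`(k_{a+1} - k_a)/k_a ≤ 3 log (k_{a+1}/k_a)`: consecutive elements of `S_n` have ratio at most `3`.
The sum telescopes to at most `3 log n`, so every entry is `O(log n)`, and `s ≤ 2√n` does
the rest.
-/

open Finset Matrix

section ApproximateDivisors

variable {n m : ℕ}

lemma mem_Sn : m ∈ Sn n ↔ ∃ k, (1 ≤ k ∧ k ≤ n) ∧ n / k = m := by
  simp [Sn]

lemma pos_of_mem_Sn (hm : m ∈ Sn n) : 0 < m := by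
  obtain ⟨k, ⟨hk1, hkn⟩, rfl⟩ := mem_Sn.1 hm
  exact Nat.div_pos hkn hk1

lemma le_of_mem_Sn (hm : m ∈ Sn n) : m ≤ n := by
  obtain ⟨k, -, rfl⟩ := mem_Sn.1 hm
  exact Nat.div_le_self n k

lemma div_mem_Sn (hm : m ∈ Sn n) : n / m ∈ Sn n :=
  mem_Sn.2 ⟨m, ⟨pos_of_mem_Sn hm, le_of_mem_Sn hm⟩, rfl⟩

lemma div_div_of_mem_Sn (hm : m ∈ Sn n) : n / (n / m) = m := by
  obtain ⟨k, ⟨hk1, hkn⟩, rfl⟩ := mem_Sn.1 hm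
  have hq : 0 < n / k := Nat.div_pos hkn hk1
  have hk : k ≤ n / (n / k) := (Nat.le_div_iff_mul_le hq).2 (Nat.mul_div_le n k)
  exact le_antisymm (Nat.div_le_div_left hk hk1) ((Nat.le_div_iff_mul_le
    (Nat.div_pos (Nat.div_le_self n k) hq)).2 (Nat.mul_div_le n _))

lemma pos_of_card_Sn_pos (h : 0 < (Sn n).card) : 0 < n := by
  obtain ⟨m, hm⟩ := card_pos.1 h
  exact (pos_of_mem_Sn hm).trans_le (le_of_mem_Sn hm)

lemma card_Sn_le : (Sn n).card ≤ 2 * Nat.sqrt n := by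
  set r := Nat.sqrt n
  have hsub : Sn n ⊆ (Icc 1 r).image (n / ·) ∪ Icc 1 r := by
    intro m hm
    obtain ⟨k, ⟨hk1, hkn⟩, rfl⟩ := mem_Sn.1 hm
    rcases le_or_gt k r with hkr | hkr
    · exact mem_union_left _ (mem_image_of_mem _ (mem_Icc.2 ⟨hk1, hkr⟩))
    · refine mem_union_right _ (mem_Icc.2 ⟨Nat.div_pos hkn hk1, ?_⟩)
      have hsq : n / (r + 1) < r + 1 := (Nat.div_lt_iff_lt_mul (by omega)).2 (Nat.lt_succ_sqrt n)
      have : n / k ≤ n / (r + 1) := Nat.div_le_div_left hkr (by omega)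
      omega
  calc (Sn n).card ≤ ((Icc 1 r).image (n / ·) ∪ Icc 1 r).card := card_le_card hsub
    _ ≤ (Icc 1 r).card + (Icc 1 r).card :=
      (card_union_le _ _).trans (Nat.add_le_add_right card_image_le _)
    _ = 2 * r := by simp [two_mul]

lemma exists_mem_Sn_lt_le_three_mul (hm : m ∈ Sn n) (h2 : 2 ≤ m) :
    ∃ u ∈ Sn n, u < m ∧ m ≤ 3 * u := by
  set K := n / m
  have hmn := le_of_mem_Sn hm
  have hK : 0 < K := Nat.div_pos hmn (by omega)
  have hKn : K + 1 ≤ n := by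
    have : K ≤ n / 2 := Nat.div_le_div_left h2 (by omega)
    omega
  refine ⟨n / (K + 1), mem_Sn.2 ⟨K + 1, ⟨by omega, hKn⟩, rfl⟩, ?_, ?_⟩
  · exact (Nat.div_lt_iff_lt_mul (by omega)).2 (Nat.lt_mul_div_succ n (by omega))
  · have hu : 0 < n / (K + 1) := Nat.div_pos hKn (by omega)
    have hlt : n < (K + 1) * (n / (K + 1) + 1) := Nat.lt_mul_div_succ n (by omega)
    have hmK : m * K ≤ n := by
      rw [← div_div_of_mem_Sn hm]; exact Nat.div_mul_le_self n K
    nlinarith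

end ApproximateDivisors

/-- `kseq n` extended to all of `ℕ`, with the value `0` beyond the last index. -/
noncomputable def kseqNat (n a : ℕ) : ℕ := if h : a < (Sn n).card then kseq n ⟨a, h⟩ else 0

section Enumeration

variable {n a b : ℕ}

lemma kseq_eq_orderEmbOfFin : kseq n = (Sn n).orderEmbOfFin rfl :=
  funext fun _ => Finset.coe_orderIsoOfFin_apply _ _ _

lemma kseq_mem (i : Fin (Sn n).card) : kseq n i ∈ Sn n := by
  rw [kseq_eq_orderEmbOfFin]; exact orderEmbOfFin_mem _ _ _

lemma kseq_strictMono : StrictMono (kseq n) := by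
  rw [kseq_eq_orderEmbOfFin]; exact (orderEmbOfFin _ _).strictMono

lemma kseq_rev (i : Fin (Sn n).card) : kseq n i.rev = n / kseq n i := by
  have h : (fun j => n / kseq n j.rev) = kseq n := by
    rw [kseq_eq_orderEmbOfFin]
    refine orderEmbOfFin_unique rfl (fun j => ?_) fun j j' hjj' => ?_
    · exact div_mem_Sn (kseq_eq_orderEmbOfFin (n := n) ▸ kseq_mem _)
    · have hlt := kseq_strictMono (Fin.rev_lt_rev.2 hjj')
      have hle : n / kseq n j.rev ≤ n / kseq n j'.rev :=
        Nat.div_le_div_left hlt.le (pos_of_mem_Sn (kseq_mem j'.rev))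
      refine hle.lt_of_ne fun heq => hlt.ne ?_
      simpa only [div_div_of_mem_Sn (kseq_mem _)] using congrArg (n / ·) heq.symm
  rw [← congrFun h i, div_div_of_mem_Sn (kseq_mem _)]

lemma kseqNat_of_lt (ha : a < (Sn n).card) : kseqNat n a = kseq n ⟨a, ha⟩ := dif_pos ha

lemma kseqNat_mem (ha : a < (Sn n).card) : kseqNat n a ∈ Sn n := by
  rw [kseqNat_of_lt ha]; exact kseq_mem _

lemma kseqNat_pos (ha : a < (Sn n).card) : 0 < kseqNat n a := pos_of_mem_Sn (kseqNat_mem ha)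

lemma kseqNat_le (ha : a < (Sn n).card) : kseqNat n a ≤ n := le_of_mem_Sn (kseqNat_mem ha)

lemma kseqNat_lt_kseqNat (hab : a < b) (hb : b < (Sn n).card) : kseqNat n a < kseqNat n b := by
  rw [kseqNat_of_lt hb, kseqNat_of_lt (hab.trans hb)]; exact kseq_strictMono hab

lemma kseqNat_le_succ (ha : a + 1 < (Sn n).card) : kseqNat n a ≤ kseqNat n (a + 1) :=
  (kseqNat_lt_kseqNat (Nat.lt_succ_self a) ha).le

lemma kseqNat_mul_kseqNat_rev_le (ha : a < (Sn n).card) :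
    kseqNat n a * kseqNat n ((Sn n).card - 1 - a) ≤ n := by
  rw [kseqNat_of_lt ha, kseqNat_of_lt (by omega)]
  have := kseq_rev (n := n) ⟨a, ha⟩
  simp only [Fin.rev, show (Sn n).card - (a + 1) = (Sn n).card - 1 - a by omega] at this
  rw [this]; exact Nat.mul_div_le n _

lemma kseqNat_succ_le (ha : a + 1 < (Sn n).card) : kseqNat n (a + 1) ≤ 3 * kseqNat n a := by
  have hlt := kseqNat_lt_kseqNat (n := n) (by omega : a < a + 1) ha
  obtain ⟨u, hu, hun, hle⟩ := exists_mem_Sn_lt_le_three_mul (kseqNat_mem ha)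
    (by have := kseqNat_pos (n := n) (a := a) (by omega); omega)
  suffices u ≤ kseqNat n a by omega
  obtain ⟨i, rfl⟩ : u ∈ Set.range (kseq n) := by
    rw [kseq_eq_orderEmbOfFin, range_orderEmbOfFin]; exact hu
  rw [kseqNat_of_lt ha] at hun
  have hi : (i : ℕ) ≤ a := Nat.lt_succ_iff.1 (kseq_strictMono.lt_iff_lt.1 hun)
  rw [kseqNat_of_lt (by omega)]
  exact kseq_strictMono.monotone hi

end Enumeration

def TmatRInv (s : ℕ) : Matrix (Fin s) (Fin s) ℝ :=
  fun i j => (if (i : ℕ) + j + 1 = s then 1 else 0) - (if (i : ℕ) + j = s then 1 else 0)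

section Antidiagonal

variable {s : ℕ}

lemma sum_fin_ite_eq (c : ℕ) (y : ℝ) :
    (∑ a : Fin s, if (a : ℕ) = c then y else 0) = if c < s then y else 0 := by
  rw [Fin.sum_univ_eq_sum_range (fun a => if a = c then y else 0), sum_ite_eq']
  simp only [mem_range]

lemma TmatR_mul_TmatRInv : TmatR s * TmatRInv s = 1 := by
  ext i j
  have key : ∀ a : Fin s, TmatR s i a * TmatRInv s a j =
      (if (a : ℕ) = s - 1 - j then if (i : ℕ) ≤ j then 1 else 0 else 0)
      - (if (a : ℕ) = s - j then if (i : ℕ) < j then 1 else 0 else 0) := fun a => by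
    simp only [TmatR, TmatRInv]
    split_ifs <;> first | (exfalso; omega) | norm_num
  rw [mul_apply, sum_congr rfl fun a _ => key a, sum_sub_distrib, sum_fin_ite_eq, sum_fin_ite_eq]
  simp only [one_apply, Fin.ext_iff]
  split_ifs <;> first | (exfalso; omega) | norm_num

lemma inv_TmatR : (TmatR s)⁻¹ = TmatRInv s := inv_eq_right_inv TmatR_mul_TmatRInv

lemma TmatRInv_mul_diagonal_mul_TmatR_apply (g : ℕ → ℝ) (a j : Fin s) :
    (TmatRInv s * diagonal (fun b : Fin s => g b) * TmatR s) a j =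
      (if (j : ℕ) ≤ a then g (s - 1 - a) else 0)
        - (if (j : ℕ) < a then g (s - a) else 0) := by
  have key : ∀ b : Fin s, (TmatRInv s * diagonal (fun b : Fin s => g b)) a b * TmatR s b j =
      (if (b : ℕ) = s - 1 - a then if (j : ℕ) ≤ a then g (s - 1 - a) else 0 else 0)
      - (if (b : ℕ) = s - a then if (j : ℕ) < a then g (s - a) else 0 else 0) := fun b => by
    simp only [mul_diagonal, TmatR, TmatRInv]
    split_ifs <;> first | (exfalso; omega) | simp_all
  rw [mul_apply, sum_congr rfl fun b _ => key b, sum_sub_distrib, sum_fin_ite_eq, sum_fin_ite_eq]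
  split_ifs <;> first | (exfalso; omega) | ring

lemma TmatR_conj_apply (f g : ℕ → ℝ) (i j : Fin s) :
    (TmatR s * diagonal (fun a : Fin s => f a) * TmatRInv s * diagonal (fun a : Fin s => g a) *
      TmatR s) i j =
      ∑ a ∈ Icc (j : ℕ) (s - 1 - i), f a * g (s - 1 - a)
        - ∑ a ∈ Ico (j : ℕ) (s - 1 - i), f (a + 1) * g (s - 1 - a) := by
  have hi := i.isLt
  have key : ∀ a : Fin s, (TmatR s * diagonal (fun a : Fin s => f a)) i a *
      (TmatRInv s * diagonal (fun a : Fin s => g a) * TmatR s) a j =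
      (if (a : ℕ) ∈ Icc (j : ℕ) (s - 1 - i) then f a * g (s - 1 - a) else 0)
      - (if (a : ℕ) ∈ Ioc (j : ℕ) (s - 1 - i) then f a * g (s - a) else 0) := fun a => by
    simp only [mul_diagonal, TmatRInv_mul_diagonal_mul_TmatR_apply, TmatR, mem_Icc, mem_Ioc]
    split_ifs <;> first | (exfalso; omega) | ring
  rw [Matrix.mul_assoc _ (TmatRInv s), Matrix.mul_assoc _ (TmatRInv s * _), mul_apply,
    sum_congr rfl fun a _ => key a, Fin.sum_univ_eq_sum_range (fun a =>
      (if a ∈ Icc (j : ℕ) (s - 1 - i) then f a * g (s - 1 - a) else 0)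
      - (if a ∈ Ioc (j : ℕ) (s - 1 - i) then f a * g (s - a) else 0)),
    sum_sub_distrib, sum_ite_mem, sum_ite_mem, inter_eq_right.2, inter_eq_right.2,
    ← Ico_add_one_add_one_eq_Ioc, ← sum_Ico_add']
  · congr 1
    exact sum_congr rfl fun a _ => by rw [Nat.sub_sub, add_comm]
  all_goals intro a; simp only [mem_Icc, mem_Ioc, mem_range]; omega

end Antidiagonal

lemma Matrix.inv_diagonal_of_ne_zero {ι K : Type*} [Fintype ι] [DecidableEq ι] [Field K]
    {v : ι → K} (hv : ∀ i, v i ≠ 0) : (diagonal v)⁻¹ = diagonal fun i => (v i)⁻¹ :=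
  inv_eq_right_inv (by rw [diagonal_mul_diagonal, ← diagonal_one]; simp [hv])

section DeformedMertens

variable {n : ℕ}

lemma Utilde_eq : Utilde n = diagonal (fun i => (n : ℝ) / kseq n i) * TmatR (Sn n).card *
    diagonal (fun i => ((kseq n i : ℝ))⁻¹) := by
  ext i j
  simp only [Utilde, TmatR, mul_diagonal, diagonal_mul]
  split_ifs
  · rw [mul_one, div_mul_eq_div_div, div_eq_mul_inv _ (kseq n j : ℝ)]
  · simp

lemma Mtilde_eq : Mtilde n = TmatR (Sn n).card *
    diagonal (fun i : Fin (Sn n).card => (kseqNat n i : ℝ)) * TmatRInv (Sn n).card *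
    diagonal (fun i : Fin (Sn n).card => (kseqNat n i : ℝ) / n) * TmatR (Sn n).card := by
  have hk : ∀ i : Fin (Sn n).card, kseqNat n i = kseq n i := fun i => kseqNat_of_lt i.isLt
  have hk0 : ∀ i : Fin (Sn n).card, 0 < (kseq n i : ℝ) := fun i => by
    exact_mod_cast pos_of_mem_Sn (kseq_mem i)
  have hn : ∀ i : Fin (Sn n).card, 0 < (n : ℝ) := fun i => by
    exact_mod_cast pos_of_card_Sn_pos i.pos
  rw [Mtilde, Utilde_eq, Matrix.mul_inv_rev, Matrix.mul_inv_rev, inv_TmatR,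
    inv_diagonal_of_ne_zero fun i => (inv_pos.2 (hk0 i)).ne',
    inv_diagonal_of_ne_zero fun i => (div_pos (hn i) (hk0 i)).ne']
  simp only [inv_inv, inv_div, hk, Matrix.mul_assoc]

lemma Mtilde_apply (i j : Fin (Sn n).card) :
    Mtilde n i j = ∑ a ∈ Icc (j : ℕ) ((Sn n).card - 1 - i),
        (kseqNat n a : ℝ) * (kseqNat n ((Sn n).card - 1 - a) / n)
      - ∑ a ∈ Ico (j : ℕ) ((Sn n).card - 1 - i),
        (kseqNat n (a + 1) : ℝ) * (kseqNat n ((Sn n).card - 1 - a) / n) := by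
  rw [Mtilde_eq, TmatR_conj_apply (fun a => kseqNat n a) (fun a => kseqNat n a / n)]

end DeformedMertens

lemma sub_div_le_three_mul_log {u v : ℝ} (hu : 0 < u) (huv : u ≤ v) (hv : v ≤ 3 * u) :
    (v - u) / u ≤ 3 * (Real.log v - Real.log u) := by
  have hv0 : 0 < v := hu.trans_le huv
  have hvu : 0 < v / u := div_pos hv0 hu
  have hlog := Real.one_sub_inv_le_log_of_pos hvu
  rw [Real.log_div hv0.ne' hu.ne'] at hlog
  have h1 : 0 ≤ 1 - (v / u)⁻¹ := by
    rw [sub_nonneg, inv_le_one₀ hvu, one_le_div hu]; exact huv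
  calc (v - u) / u = v / u * (1 - (v / u)⁻¹) := by field_simp
    _ ≤ 3 * (1 - (v / u)⁻¹) := by gcongr; rwa [div_le_iff₀ hu]
    _ ≤ 3 * (Real.log v - Real.log u) := by gcongr

lemma sum_Icc_mul_sub_sum_Ico_mul {M : Type*} [CommRing M] (f h : ℕ → M) {j m : ℕ}
    (hjm : j ≤ m) :
    ∑ a ∈ Icc j m, f a * h a - ∑ a ∈ Ico j m, f (a + 1) * h a
      = f m * h m - ∑ a ∈ Ico j m, (f (a + 1) - f a) * h a := by
  rw [← Ico_add_one_right_eq_Icc, sum_Ico_succ_top hjm]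
  simp only [sub_mul, sum_sub_distrib]
  ring

section Bound

variable {n m j : ℕ}

lemma sum_Ico_kseqNat_le_log (hm : m < (Sn n).card) (hjm : j ≤ m) :
    ∑ a ∈ Ico j m,
        ((kseqNat n (a + 1) : ℝ) - kseqNat n a) * (kseqNat n ((Sn n).card - 1 - a) / n)
      ≤ 3 * Real.log n := by
  have hn : (0 : ℝ) < n := by exact_mod_cast pos_of_card_Sn_pos (by omega)
  have hterm : ∀ a ∈ Ico j m,
      ((kseqNat n (a + 1) : ℝ) - kseqNat n a) * (kseqNat n ((Sn n).card - 1 - a) / n)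
        ≤ 3 * (Real.log (kseqNat n (a + 1)) - Real.log (kseqNat n a)) := fun a ha => by
    rw [mem_Ico] at ha
    have hka : (0 : ℝ) < kseqNat n a := by exact_mod_cast kseqNat_pos (by omega)
    have hmono : (kseqNat n a : ℝ) ≤ kseqNat n (a + 1) := by
      exact_mod_cast kseqNat_le_succ (by omega)
    have hratio : (kseqNat n (a + 1) : ℝ) ≤ 3 * kseqNat n a := by
      exact_mod_cast kseqNat_succ_le (by omega)
    have hrev : (kseqNat n ((Sn n).card - 1 - a) : ℝ) / n ≤ 1 / kseqNat n a := by
      rw [div_le_div_iff₀ hn hka, one_mul, mul_comm]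
      exact_mod_cast kseqNat_mul_kseqNat_rev_le (by omega)
    calc _ ≤ ((kseqNat n (a + 1) : ℝ) - kseqNat n a) * (1 / kseqNat n a) :=
          mul_le_mul_of_nonneg_left hrev (sub_nonneg.2 hmono)
      _ ≤ _ := (mul_one_div _ _).trans_le (sub_div_le_three_mul_log hka hmono hratio)
  have hkj : (1 : ℝ) ≤ kseqNat n j := by exact_mod_cast kseqNat_pos (hjm.trans_lt hm)
  have hkm : (kseqNat n m : ℝ) ≤ n := by exact_mod_cast kseqNat_le hm
  calc _ ≤ ∑ a ∈ Ico j m, 3 * (Real.log (kseqNat n (a + 1)) - Real.log (kseqNat n a)) :=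
        sum_le_sum hterm
    _ = 3 * (Real.log (kseqNat n m) - Real.log (kseqNat n j)) := by
      rw [← mul_sum, sum_Ico_sub (fun a => Real.log (kseqNat n a)) hjm]
    _ ≤ 3 * Real.log n := by
      have := Real.log_nonneg hkj
      have := Real.log_le_log (by exact_mod_cast kseqNat_pos hm) hkm
      linarith

lemma abs_Mtilde_apply_le (i j : Fin (Sn n).card) : |Mtilde n i j| ≤ 1 + 3 * Real.log n := by
  have hlog : 0 ≤ Real.log n := Real.log_natCast_nonneg n
  rw [Mtilde_apply]
  rcases le_or_gt (j : ℕ) ((Sn n).card - 1 - i) with hjm | hjm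
  · have hm : (Sn n).card - 1 - i < (Sn n).card := by omega
    rw [sum_Icc_mul_sub_sum_Ico_mul _ _ hjm]
    have hdiag_nonneg : 0 ≤ (kseqNat n ((Sn n).card - 1 - i) : ℝ) *
        (kseqNat n ((Sn n).card - 1 - ((Sn n).card - 1 - i)) / n) := by positivity
    have hdiag_le : (kseqNat n ((Sn n).card - 1 - i) : ℝ) *
        (kseqNat n ((Sn n).card - 1 - ((Sn n).card - 1 - i)) / n) ≤ 1 := by
      rw [mul_div_assoc', div_le_one (by exact_mod_cast pos_of_card_Sn_pos (by omega))]
      exact_mod_cast kseqNat_mul_kseqNat_rev_le hm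
    have hsum_nonneg : 0 ≤ ∑ a ∈ Ico (j : ℕ) ((Sn n).card - 1 - i),
        ((kseqNat n (a + 1) : ℝ) - kseqNat n a) * (kseqNat n ((Sn n).card - 1 - a) / n) :=
      sum_nonneg fun a ha => mul_nonneg
        (sub_nonneg.2 (by exact_mod_cast kseqNat_le_succ (by rw [mem_Ico] at ha; omega)))
        (by positivity)
    have hsum_le := sum_Ico_kseqNat_le_log hm hjm
    rw [abs_le]
    constructor <;> linarith
  · simp [Icc_eq_empty_of_lt hjm, Ico_eq_empty_of_le hjm.le]
    positivity

end Bound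

lemma sqrt_sum_sq_le_card_mul {ι : Type*} [Fintype ι] (A : Matrix ι ι ℝ) {B : ℝ}
    (hA : ∀ i j, |A i j| ≤ B) : √(∑ i, ∑ j, A i j ^ 2) ≤ Fintype.card ι * B := by
  rcases isEmpty_or_nonempty ι with hι | ⟨⟨i⟩⟩
  · simp
  have hB : 0 ≤ B := (abs_nonneg _).trans (hA i i)
  refine Real.sqrt_le_iff.2 ⟨by positivity, ?_⟩
  calc ∑ i, ∑ j, A i j ^ 2 ≤ ∑ _i : ι, ∑ _j : ι, B ^ 2 :=
        sum_le_sum fun i _ => sum_le_sum fun j _ => sq_le_sq.2 ((hA i j).trans (le_abs_self B))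
    _ = (Fintype.card ι * B) ^ 2 := by simp [sum_const, card_univ]; ring

/-- The Frobenius norm of the deformed Mertens matrix satisfies `‖M̃_n‖_F ≤ C √n log(n+1)`. -/
theorem stmt_19 :
    ∃ C : ℝ, 0 < C ∧ ∀ n : ℕ, 0 < n →
      Real.sqrt (∑ i, ∑ j, (Mtilde n i j) ^ 2) ≤ C * Real.sqrt n * Real.log (n + 1) := by
  refine ⟨10, by norm_num, fun n hn => ?_⟩
  have hn1 : (1 : ℝ) ≤ n := by exact_mod_cast hn
  have hlog : 1 + 3 * Real.log n ≤ 5 * Real.log (n + 1) := by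
    have := Real.log_le_log (by linarith) (by linarith : (n : ℝ) ≤ n + 1)
    have := Real.log_le_log zero_lt_two (by linarith : (2 : ℝ) ≤ n + 1)
    linarith [Real.log_two_gt_d9]
  have hcard : ((Sn n).card : ℝ) ≤ 2 * √n := by
    have : ((Sn n).card : ℝ) ≤ 2 * Nat.sqrt n := by exact_mod_cast card_Sn_le
    linarith [Real.nat_sqrt_le_real_sqrt (a := n)]
  calc √(∑ i, ∑ j, Mtilde n i j ^ 2) ≤ (Sn n).card * (1 + 3 * Real.log n) := by
        simpa using sqrt_sum_sq_le_card_mul (Mtilde n) abs_Mtilde_apply_le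
    _ ≤ 2 * √n * (5 * Real.log (n + 1)) := by gcongr
    _ = 10 * √n * Real.log (n + 1) := by ring
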